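/- Assume ‖P_Ω P_T‖ ≤ 1/2, so that P_T P_{Ω⊥} P_T restricted to T is invertible. Then for any matrix M ∈ ℝ^{n×n}, the pair (L_oracle, S_oracle) with L_oracle = (P_T P_{Ω⊥} P_T)^{-1} P_T P_{Ω⊥}(M) (the inverse taken of the restriction to T) and S_oracle = P_Ω(M − L_oracle) is an optimal solution of the least squares problem: minimize ‖M − L − S‖_F over all L ∈ T and all S supported on Ω. -/

import Mathlib

open Matrix BigOperators

noncomputable def frobNorm {m k : ℕ} (A : Matrix (Fin m) (Fin k) ℝ) : ℝ :=
  Real.sqrt (∑ i, ∑ j, (A i j) ^ 2)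

noncomputable def nuclearNorm {m k : ℕ} (A : Matrix (Fin m) (Fin k) ℝ) : ℝ :=
  ∑ i, Real.sqrt ((show (Aᵀ * A).IsHermitian from Matrix.isHermitian_iff_isSymm.mpr
    (by simp [Matrix.IsSymm, Matrix.transpose_mul])).eigenvalues i)

def l1Norm {m k : ℕ} (A : Matrix (Fin m) (Fin k) ℝ) : ℝ :=
  ∑ i, ∑ j, |A i j|

noncomputable def linfNorm {m k : ℕ} (A : Matrix (Fin m) (Fin k) ℝ) : ℝ :=
  ⨆ i, ⨆ j, |A i j|

noncomputable def specNorm {m k : ℕ} (A : Matrix (Fin m) (Fin k) ℝ) : ℝ :=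
  ‖LinearMap.toContinuousLinearMap (Matrix.toEuclideanLin A)‖

def finner {m k : ℕ} (A B : Matrix (Fin m) (Fin k) ℝ) : ℝ :=
  ∑ i, ∑ j, A i j * B i j

noncomputable def projSet {n : ℕ} (Ω : Set (Fin n × Fin n)) (S : Matrix (Fin n) (Fin n) ℝ) :
    Matrix (Fin n) (Fin n) ℝ :=
  fun i j => Ω.indicator (fun p => S p.1 p.2) (i, j)

def suppSet {n : ℕ} (S : Matrix (Fin n) (Fin n) ℝ) : Set (Fin n × Fin n) :=
  {p | S p.1 p.2 ≠ 0}

noncomputable def sgnMat {n : ℕ} (S : Matrix (Fin n) (Fin n) ℝ) : Matrix (Fin n) (Fin n) ℝ :=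
  fun i j => Real.sign (S i j)

def Tspace {n r : ℕ} (U V : Matrix (Fin n) (Fin r) ℝ) : Set (Matrix (Fin n) (Fin n) ℝ) :=
  {X | ∃ Q R : Matrix (Fin n) (Fin r) ℝ, X = U * Qᵀ + R * Vᵀ}

def IsOrthProjOnto {n : ℕ} (P : Matrix (Fin n) (Fin n) ℝ →ₗ[ℝ] Matrix (Fin n) (Fin n) ℝ)
    (T : Set (Matrix (Fin n) (Fin n) ℝ)) : Prop :=
  (∀ X, P X ∈ T) ∧ (∀ X ∈ T, P X = X) ∧ (∀ X Y, Y ∈ T → finner (X - P X) Y = 0)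

noncomputable def pairFrob {n : ℕ} (X : Matrix (Fin n) (Fin n) ℝ × Matrix (Fin n) (Fin n) ℝ) : ℝ :=
  Real.sqrt (frobNorm X.1 ^ 2 + frobNorm X.2 ^ 2)

noncomputable def projGamma {n : ℕ} (X : Matrix (Fin n) (Fin n) ℝ × Matrix (Fin n) (Fin n) ℝ) :
    Matrix (Fin n) (Fin n) ℝ × Matrix (Fin n) (Fin n) ℝ :=
  ((1/2 : ℝ) • (X.1 + X.2), (1/2 : ℝ) • (X.1 + X.2))

open scoped Classical

noncomputable def suppFinset {n : ℕ} (S : Matrix (Fin n) (Fin n) ℝ) : Finset (Fin n × Fin n) :=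
  Finset.univ.filter (fun p => S p.1 p.2 ≠ 0)

/-! With `R = M - L_or - S_or`, the normal equation gives `P_T R = 0` and the definition of
`S_or` gives `P_Ω R = 0`, so `R` is orthogonal to `T` and to every matrix supported on `Ω`. For
feasible `(L, S)`, `(M - L - S) - R = (L_or - L) + (S_or - S)` is a sum of two such matrices, and
Pythagoras gives `‖R‖_F ≤ ‖M - L - S‖_F`. The same orthogonality shows that an element of `T` in
the kernel of `P_T P_{Ω⊥}` is supported on `Ω`, hence fixed by `P_Ω P_T`, hence zero because
`‖P_Ω P_T‖ < 1`; so `P_T P_{Ω⊥}` is invertible on the finite-dimensional space `T`. -/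

section Frobenius

variable {m k : ℕ}

def euclideanEquiv : Matrix (Fin m) (Fin k) ℝ ≃ₗ[ℝ] EuclideanSpace ℝ (Fin m × Fin k) :=
  (Matrix.ofLinearEquiv ℝ).symm.trans <|
    (LinearEquiv.curry ℝ ℝ (Fin m) (Fin k)).symm.trans (WithLp.linearEquiv 2 ℝ _).symm

@[simp] lemma euclideanEquiv_apply (A : Matrix (Fin m) (Fin k) ℝ) (p : Fin m × Fin k) :
    euclideanEquiv A p = A p.1 p.2 := rfl

lemma finner_eq_inner (A B : Matrix (Fin m) (Fin k) ℝ) :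
    finner A B = inner ℝ (euclideanEquiv A) (euclideanEquiv B) := by
  simp [finner, PiLp.inner_apply, Fintype.sum_prod_type, mul_comm]

lemma frobNorm_eq_norm (A : Matrix (Fin m) (Fin k) ℝ) :
    frobNorm A = ‖euclideanEquiv A‖ := by
  simp [frobNorm, EuclideanSpace.norm_eq, Fintype.sum_prod_type]

lemma frobNorm_eq_zero {A : Matrix (Fin m) (Fin k) ℝ} : frobNorm A = 0 ↔ A = 0 := by
  rw [frobNorm_eq_norm, norm_eq_zero, LinearEquiv.map_eq_zero_iff]

lemma finner_self_eq_zero {A : Matrix (Fin m) (Fin k) ℝ} : finner A A = 0 ↔ A = 0 := by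
  rw [finner_eq_inner, inner_self_eq_zero, LinearEquiv.map_eq_zero_iff]

lemma finner_zero_left (B : Matrix (Fin m) (Fin k) ℝ) : finner 0 B = 0 := by
  simp [finner]

lemma finner_add_right (A B C : Matrix (Fin m) (Fin k) ℝ) :
    finner A (B + C) = finner A B + finner A C := by
  simp only [finner_eq_inner, map_add, inner_add_right]

lemma frobNorm_le_frobNorm_add {A B : Matrix (Fin m) (Fin k) ℝ} (h : finner A B = 0) :
    frobNorm A ≤ frobNorm (A + B) := by
  rw [finner_eq_inner] at h
  rw [frobNorm_eq_norm, frobNorm_eq_norm, map_add,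
    mul_self_le_mul_self_iff (norm_nonneg _) (norm_nonneg _),
    norm_add_sq_eq_norm_sq_add_norm_sq_real h]
  exact le_add_of_nonneg_right (mul_self_nonneg _)

end Frobenius

section Projections

variable {n : ℕ} (Ω : Set (Fin n × Fin n))

lemma projSet_apply (X : Matrix (Fin n) (Fin n) ℝ) (i j : Fin n) :
    projSet Ω X i j = if (i, j) ∈ Ω then X i j else 0 := by
  simp [projSet, Set.indicator_apply]

noncomputable def projSetLinearMap :
    Matrix (Fin n) (Fin n) ℝ →ₗ[ℝ] Matrix (Fin n) (Fin n) ℝ where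
  toFun := projSet Ω
  map_add' X Y := by ext i j; simp only [Matrix.add_apply, projSet_apply]; split_ifs <;> simp
  map_smul' c X := by ext i j; simp only [Matrix.smul_apply, projSet_apply]; split_ifs <;> simp

lemma projSet_neg (X : Matrix (Fin n) (Fin n) ℝ) :
    projSet Ω (-X) = -projSet Ω X :=
  (projSetLinearMap Ω).map_neg X

lemma projSet_sub (X Y : Matrix (Fin n) (Fin n) ℝ) :
    projSet Ω (X - Y) = projSet Ω X - projSet Ω Y :=
  (projSetLinearMap Ω).map_sub X Y

lemma projSet_projSet (X : Matrix (Fin n) (Fin n) ℝ) :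
    projSet Ω (projSet Ω X) = projSet Ω X := by
  ext i j; simp only [projSet_apply]; split_ifs <;> rfl

lemma projSet_sub_projSet_self (X : Matrix (Fin n) (Fin n) ℝ) :
    projSet Ω (X - projSet Ω X) = 0 := by
  rw [projSet_sub, projSet_projSet, sub_self]

lemma finner_projSet_left (X Y : Matrix (Fin n) (Fin n) ℝ) :
    finner (projSet Ω X) Y = finner X (projSet Ω Y) := by
  unfold finner
  refine Finset.sum_congr rfl fun i _ => Finset.sum_congr rfl fun j _ => ?_
  simp only [projSet_apply]; split_ifs <;> simp

variable {Ω}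

lemma finner_eq_zero_of_projSet_eq_zero {R W : Matrix (Fin n) (Fin n) ℝ}
    (hR : projSet Ω R = 0) (hW : projSet Ω W = W) : finner R W = 0 := by
  rw [← hW, ← finner_projSet_left, hR, finner_zero_left]

variable {P : Matrix (Fin n) (Fin n) ℝ →ₗ[ℝ] Matrix (Fin n) (Fin n) ℝ}
  {T : Set (Matrix (Fin n) (Fin n) ℝ)}

lemma IsOrthProjOnto.finner_eq_zero_of_apply_eq_zero (hP : IsOrthProjOnto P T)
    {R Y : Matrix (Fin n) (Fin n) ℝ} (hR : P R = 0) (hY : Y ∈ T) : finner R Y = 0 := by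
  simpa [hR] using hP.2.2 R Y hY

lemma IsOrthProjOnto.finner_add_eq_zero (hP : IsOrthProjOnto P T)
    {R Y W : Matrix (Fin n) (Fin n) ℝ} (hPR : P R = 0) (hΩR : projSet Ω R = 0) (hY : Y ∈ T)
    (hW : projSet Ω W = W) : finner R (Y + W) = 0 := by
  rw [finner_add_right, hP.finner_eq_zero_of_apply_eq_zero hPR hY,
    finner_eq_zero_of_projSet_eq_zero hΩR hW, add_zero]

lemma IsOrthProjOnto.eq_zero_of_projSet_eq_self (hP : IsOrthProjOnto P T) {c : ℝ} (hc : c < 1)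
    (hop : ∀ X, frobNorm (projSet Ω (P X)) ≤ c * frobNorm X)
    {x : Matrix (Fin n) (Fin n) ℝ} (hx : x ∈ T) (hΩx : projSet Ω x = x) : x = 0 := by
  have hle := hop x
  rw [hP.2.1 x hx, hΩx] at hle
  have hnonneg : 0 ≤ frobNorm x := Real.sqrt_nonneg _
  exact frobNorm_eq_zero.mp (by nlinarith)

lemma IsOrthProjOnto.eq_zero_of_apply_sub_projSet_eq_zero (hP : IsOrthProjOnto P T)
    (hTΩ : ∀ x ∈ T, projSet Ω x = x → x = 0)
    {x : Matrix (Fin n) (Fin n) ℝ} (hx : x ∈ T) (h : P (x - projSet Ω x) = 0) : x = 0 := by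
  have hΩ : projSet Ω (-projSet Ω x) = -projSet Ω x := by rw [projSet_neg, projSet_projSet]
  have hperp := hP.finner_add_eq_zero h (projSet_sub_projSet_self Ω x) hx hΩ
  rw [← sub_eq_add_neg, finner_self_eq_zero, sub_eq_zero] at hperp
  exact hTΩ x hx hperp.symm

end Projections

section OracleProblem

variable {n : ℕ} {Ω : Set (Fin n × Fin n)} {T : Submodule ℝ (Matrix (Fin n) (Fin n) ℝ)}
  {P : Matrix (Fin n) (Fin n) ℝ →ₗ[ℝ] Matrix (Fin n) (Fin n) ℝ}

lemma IsOrthProjOnto.exists_mem_normal_eq (hP : IsOrthProjOnto P T)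
    (hTΩ : ∀ x ∈ T, projSet Ω x = x → x = 0) (M : Matrix (Fin n) (Fin n) ℝ) :
    ∃ L ∈ T, P (P L - projSet Ω (P L)) = P (M - projSet Ω M) := by
  let G : T →ₗ[ℝ] T :=
    (P ∘ₗ (LinearMap.id - projSetLinearMap Ω)).restrict fun x _ => hP.1 _
  have hG : Function.Injective G := by
    rw [← LinearMap.ker_eq_bot, LinearMap.ker_eq_bot']
    exact fun x hx => Subtype.ext <|
      hP.eq_zero_of_apply_sub_projSet_eq_zero hTΩ x.2 (congrArg Subtype.val hx)
  obtain ⟨L, hL⟩ := LinearMap.injective_iff_surjective.mp hG ⟨P (M - projSet Ω M), hP.1 _⟩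
  refine ⟨L, L.2, ?_⟩
  rw [hP.2.1 L L.2]
  exact congrArg Subtype.val hL

lemma IsOrthProjOnto.frobNorm_residual_le (hP : IsOrthProjOnto P T)
    {M Lor L S : Matrix (Fin n) (Fin n) ℝ} (hLor : Lor ∈ T)
    (hnormal : P (P Lor - projSet Ω (P Lor)) = P (M - projSet Ω M))
    (hL : L ∈ T) (hS : projSet Ω S = S) :
    frobNorm (M - Lor - projSet Ω (M - Lor)) ≤ frobNorm (M - L - S) := by
  have hPR : P (M - Lor - projSet Ω (M - Lor)) = 0 := by
    rw [hP.2.1 Lor hLor] at hnormal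
    rw [projSet_sub, show M - Lor - (projSet Ω M - projSet Ω Lor)
      = (M - projSet Ω M) - (Lor - projSet Ω Lor) by abel, map_sub, hnormal, sub_self]
  have hW : projSet Ω (projSet Ω (M - Lor) - S) = projSet Ω (M - Lor) - S := by
    rw [projSet_sub, projSet_projSet, hS]
  have hperp := hP.finner_add_eq_zero hPR (projSet_sub_projSet_self Ω (M - Lor))
    (T.sub_mem hLor hL) hW
  convert frobNorm_le_frobNorm_add hperp using 2
  abel

end OracleProblem

/-- the oracle least-squares solution.
Assume ‖P_Ω P_T‖ ≤ 1/2, so P_T P_{Ω⊥} P_T restricted to T is invertible. For any M,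
the matrix L_oracle = (P_T P_{Ω⊥} P_T)⁻¹ P_T P_{Ω⊥}(M) — i.e. the (unique) element of T
satisfying the normal equation P_T P_{Ω⊥} P_T (L_oracle) = P_T P_{Ω⊥}(M) — together with
S_oracle = P_Ω(M − L_oracle), is an optimal solution of
min ‖M − L − S‖_F over L ∈ T and S supported on Ω. -/
theorem stmt12 {n : ℕ} (T : Submodule ℝ (Matrix (Fin n) (Fin n) ℝ))
    (PT : Matrix (Fin n) (Fin n) ℝ →ₗ[ℝ] Matrix (Fin n) (Fin n) ℝ)
    (hPT : IsOrthProjOnto PT (T : Set (Matrix (Fin n) (Fin n) ℝ)))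
    (Ω : Set (Fin n × Fin n))
    -- ‖P_Ω P_T‖ ≤ 1/2
    (hop : ∀ X : Matrix (Fin n) (Fin n) ℝ,
      frobNorm (projSet Ω (PT X)) ≤ (1 / 2) * frobNorm X)
    (M : Matrix (Fin n) (Fin n) ℝ) :
    -- L_oracle exists (the restricted operator is invertible) ...
    (∃ Lor, Lor ∈ T ∧
      PT (PT Lor - projSet Ω (PT Lor)) = PT (M - projSet Ω M)) ∧
    -- ... and (L_oracle, S_oracle) solves the least squares problem
    ∀ Lor : Matrix (Fin n) (Fin n) ℝ, Lor ∈ T →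
      PT (PT Lor - projSet Ω (PT Lor)) = PT (M - projSet Ω M) →
      ∀ Sor : Matrix (Fin n) (Fin n) ℝ, Sor = projSet Ω (M - Lor) →
        ∀ L S : Matrix (Fin n) (Fin n) ℝ, L ∈ T → projSet Ω S = S →
          frobNorm (M - Lor - Sor) ≤ frobNorm (M - L - S) := by
  have hTΩ : ∀ x ∈ T, projSet Ω x = x → x = 0 :=
    fun x hx => hPT.eq_zero_of_projSet_eq_self (by norm_num) hop hx
  refine ⟨hPT.exists_mem_normal_eq hTΩ M, ?_⟩
  rintro Lor hLor hnormal Sor rfl L S hL hS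
  exact hPT.frobNorm_residual_le hLor hnormal hL hS
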